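/- Let f, g ∈ A = MvPolynomial (Fin (2n)) (Polynomial ℂ) be polynomials whose total degree in the y-variables is at most 2. Then their Moyal commutator equals ℏ times their Poisson bracket with no higher corrections: f ⋆ g − g ⋆ f = ℏ · ∑_{i, j ∈ Fin(2n)} ω̂(i, j) · (∂_i f) · (∂_j g). In particular the Moyal commutator of two polynomials of y-degree at most 2 again has y-degree at most 2; this underlies the embedding of sp_{2n} into the Weyl algebra acting by inner derivations. -/

import Mathlib

noncomputable section

/-- The polynomial Weyl algebra carrier: polynomials in `y₀, …, y_{2n−1}` with
coefficients in `ℂ[ℏ]` (where `ℏ = Polynomial.X`). -/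
abbrev WeylPoly (n : ℕ) := MvPolynomial (Fin (2*n)) (Polynomial ℂ)

/-- The standard symplectic matrix `ω̂`: `ω̂(i,j) = 1` if `j = i + n`, `−1` if
`i = j + n`, and `0` otherwise. -/
def omegaHat (n : ℕ) (i j : Fin (2*n)) : ℂ :=
  if (j : ℕ) = (i : ℕ) + n then 1 else if (i : ℕ) = (j : ℕ) + n then -1 else 0

/-- Iterated partial derivative `∂_{v 0} ⋯ ∂_{v (m−1)}`. -/
def multiDeriv {n m : ℕ} (v : Fin m → Fin (2*n)) (f : WeylPoly n) : WeylPoly n :=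
  (List.ofFn v).foldr (fun i g => MvPolynomial.pderiv i g) f

/-- The Moyal product
`f ⋆ g = ∑_{m} (ℏ^m / (2^m m!)) ∑_{i₁,…,i_m} ∑_{j₁,…,j_m} (∏_s ω̂(i_s, j_s)) ·
(∂_{i₁} ⋯ ∂_{i_m} f) · (∂_{j₁} ⋯ ∂_{j_m} g)`; the sum over `m` is truncated at
`totalDegree f`, beyond which all terms vanish. -/
def moyal (n : ℕ) (f g : WeylPoly n) : WeylPoly n :=
  ∑ m ∈ Finset.range (f.totalDegree + 1),
    MvPolynomial.C (Polynomial.C (1 / ((2:ℂ)^m * (Nat.factorial m : ℂ))) * Polynomial.X ^ m) *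
      ∑ v : Fin m → Fin (2*n), ∑ w : Fin m → Fin (2*n),
        MvPolynomial.C (Polynomial.C (∏ s : Fin m, omegaHat n (v s) (w s))) *
          (multiDeriv v f * multiDeriv w g)

/-! The Moyal commutator is `∑ₘ (1 - (-1)^m) Tₘ(f, g)`, where `Tₘ` is the `m`-th term of the
Moyal product, because swapping `f` and `g` transposes the antisymmetric `ω̂` in each of the `m`
factors. `T₁` is `ℏ/2` times the Poisson bracket, and `Tₘ(f, g)` involves `m`-th derivatives of
`f`, so it vanishes for `m > 2` when `f` has degree at most `2`. -/

open MvPolynomial Finset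

namespace MvPolynomial

variable {σ R : Type*} [CommSemiring R]

lemma totalDegree_C_mul_le (a : R) (p : MvPolynomial σ R) :
    (C a * p).totalDegree ≤ p.totalDegree := by
  simpa using totalDegree_mul (C a) p

lemma totalDegree_pderiv_le (i : σ) (f : MvPolynomial σ R) :
    (pderiv i f).totalDegree ≤ f.totalDegree - 1 := by
  classical
  conv_lhs => rw [f.as_sum]
  rw [map_sum]
  refine totalDegree_finsetSum_le fun s hs => ?_
  rw [pderiv_monomial]
  by_cases h : s i = 0
  · simp [h]
  · have hsum : (s.sum fun _ e => e) = ((s - Finsupp.single i 1).sum fun _ e => e) + 1 := by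
      conv_lhs => rw [← Finsupp.sub_add_single_one_cancel h]
      rw [Finsupp.sum_add_index' (fun _ => rfl) (fun _ _ _ => rfl), Finsupp.sum_single_index rfl]
    have := le_totalDegree hs
    refine (totalDegree_monomial_le _ _).trans ?_
    change ((s - Finsupp.single i 1).sum fun _ e => e) ≤ _
    omega

lemma totalDegree_foldr_pderiv_le (l : List σ) (f : MvPolynomial σ R) :
    (l.foldr (fun i g => pderiv i g) f).totalDegree ≤ f.totalDegree - l.length := by
  induction l with
  | nil => simp
  | cons a l ih =>
    have := totalDegree_pderiv_le a (l.foldr (fun i g => pderiv i g) f)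
    simp only [List.foldr_cons, List.length_cons]
    omega

lemma foldr_pderiv_eq_zero_of_totalDegree_lt {l : List σ} {f : MvPolynomial σ R}
    (h : f.totalDegree < l.length) : l.foldr (fun i g => pderiv i g) f = 0 := by
  cases l with
  | nil => simp at h
  | cons a l =>
    have := totalDegree_foldr_pderiv_le l f
    rw [List.length_cons] at h
    rw [List.foldr_cons, (totalDegree_eq_zero_iff_eq_C (p := l.foldr _ f)).mp (by omega), pderiv_C]

end MvPolynomial

lemma multiDeriv_eq_zero_of_totalDegree_lt {n m : ℕ} (v : Fin m → Fin (2*n)) {f : WeylPoly n}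
    (h : f.totalDegree < m) : multiDeriv v f = 0 :=
  foldr_pderiv_eq_zero_of_totalDegree_lt (by rwa [List.length_ofFn])

lemma multiDeriv_fin_one {n : ℕ} (v : Fin 1 → Fin (2*n)) (f : WeylPoly n) :
    multiDeriv v f = pderiv (v 0) f := by
  simp [multiDeriv]

lemma omegaHat_swap {n : ℕ} (i j : Fin (2*n)) : omegaHat n j i = -omegaHat n i j := by
  -- both conditions `j = i + n` and `i = j + n` hold only if `n = 0`, when `Fin (2*n)` is empty
  have := i.isLt
  unfold omegaHat
  split_ifs <;> first | omega | norm_num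

lemma prod_omegaHat_swap {n m : ℕ} (v w : Fin m → Fin (2*n)) :
    ∏ s, omegaHat n (w s) (v s) = (-1) ^ m * ∏ s, omegaHat n (v s) (w s) := by
  simp_rw [omegaHat_swap (v _), prod_neg, card_univ, Fintype.card_fin]

def moyalTerm (n m : ℕ) (f g : WeylPoly n) : WeylPoly n :=
  C (Polynomial.C (1 / ((2:ℂ)^m * (Nat.factorial m : ℂ))) * Polynomial.X ^ m) *
    ∑ v : Fin m → Fin (2*n), ∑ w : Fin m → Fin (2*n),
      C (Polynomial.C (∏ s : Fin m, omegaHat n (v s) (w s))) * (multiDeriv v f * multiDeriv w g)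

def poissonBracket (n : ℕ) (f g : WeylPoly n) : WeylPoly n :=
  ∑ i : Fin (2*n), ∑ j : Fin (2*n), C (Polynomial.C (omegaHat n i j)) * (pderiv i f * pderiv j g)

lemma moyal_eq_sum_range_moyalTerm {n N : ℕ} {f : WeylPoly n} (hN : f.totalDegree < N)
    (g : WeylPoly n) : moyal n f g = ∑ m ∈ range N, moyalTerm n m f g := by
  refine sum_subset (range_subset_range.mpr hN) fun m _ hm => ?_
  have hfm : f.totalDegree < m := by simp only [mem_range, not_lt] at hm; omega
  simp [multiDeriv_eq_zero_of_totalDegree_lt _ hfm]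

lemma moyalTerm_swap (n m : ℕ) (f g : WeylPoly n) :
    moyalTerm n m g f = (-1) ^ m * moyalTerm n m f g := by
  simp only [moyalTerm, mul_sum]
  rw [sum_comm]
  refine sum_congr rfl fun v _ => sum_congr rfl fun w _ => ?_
  rw [prod_omegaHat_swap]
  simp only [map_mul, map_pow, map_neg, map_one]
  ring

lemma moyalTerm_one (n : ℕ) (f g : WeylPoly n) :
    moyalTerm n 1 f g = C (Polynomial.C 2⁻¹ * Polynomial.X) * poissonBracket n f g := by
  simp only [moyalTerm, poissonBracket, multiDeriv_fin_one]
  simp_rw [← (Equiv.funUnique (Fin 1) _).symm.sum_comp]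
  norm_num

lemma totalDegree_poissonBracket_le (n : ℕ) (f g : WeylPoly n) :
    (poissonBracket n f g).totalDegree ≤ (f.totalDegree - 1) + (g.totalDegree - 1) := by
  refine totalDegree_finsetSum_le fun i _ => totalDegree_finsetSum_le fun j _ => ?_
  calc _ ≤ (pderiv i f * pderiv j g).totalDegree := totalDegree_C_mul_le _ _
    _ ≤ (pderiv i f).totalDegree + (pderiv j g).totalDegree := totalDegree_mul _ _
    _ ≤ _ := add_le_add (totalDegree_pderiv_le i f) (totalDegree_pderiv_le j g)

theorem moyal_commutator_of_degree_le_two_general (n : ℕ)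
    (f g : WeylPoly n) (hf : f.totalDegree ≤ 2) (hg : g.totalDegree ≤ 2) :
    moyal n f g - moyal n g f =
      MvPolynomial.C Polynomial.X *
        ∑ i : Fin (2*n), ∑ j : Fin (2*n),
          MvPolynomial.C (Polynomial.C (omegaHat n i j)) *
            (MvPolynomial.pderiv i f * MvPolynomial.pderiv j g)
    ∧ (moyal n f g - moyal n g f).totalDegree ≤ 2 := by
  have hcomm : moyal n f g - moyal n g f = C Polynomial.X * poissonBracket n f g := by
    have hhalf : (2 : WeylPoly n) * C (Polynomial.C 2⁻¹ * Polynomial.X) = C Polynomial.X := by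
      rw [← map_ofNat C 2, ← map_mul, ← mul_assoc, ← map_ofNat Polynomial.C 2, ← Polynomial.C_mul]
      norm_num
    rw [moyal_eq_sum_range_moyalTerm (N := 3) (by omega),
      moyal_eq_sum_range_moyalTerm (N := 3) (by omega)]
    simp only [sum_range_succ, sum_range_zero, moyalTerm_swap n _ f g, moyalTerm_one, ← hhalf]
    ring
  refine ⟨hcomm, ?_⟩
  rw [hcomm]
  have := totalDegree_poissonBracket_le n f g
  exact (totalDegree_C_mul_le _ _).trans (by omega)

/-- For polynomials `f, g` of total degree at most `2` in the
`y`-variables, the Moyal commutator equals `ℏ` times the Poisson bracket with no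
higher corrections:
`f ⋆ g − g ⋆ f = ℏ · ∑_{i,j} ω̂(i,j) (∂_i f)(∂_j g)`.
In particular this commutator again has `y`-degree at most `2`; this underlies the
embedding of `sp_{2n}` into the Weyl algebra acting by inner derivations. -/
theorem moyal_commutator_of_degree_le_two (n : ℕ) (hn : 1 ≤ n)
    (f g : WeylPoly n) (hf : f.totalDegree ≤ 2) (hg : g.totalDegree ≤ 2) :
    moyal n f g - moyal n g f =
      MvPolynomial.C Polynomial.X *
        ∑ i : Fin (2*n), ∑ j : Fin (2*n),
          MvPolynomial.C (Polynomial.C (omegaHat n i j)) *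
            (MvPolynomial.pderiv i f * MvPolynomial.pderiv j g)
    ∧ (moyal n f g - moyal n g f).totalDegree ≤ 2 :=
  moyal_commutator_of_degree_le_two_general n f g hf hg
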